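/- Let m ≥ 1, let ℓ be an integer with 1 ≤ ℓ ≤ m and gcd(ℓ, m) = 1, and let λ ∈ ℤ. Define a_j = λ + 1 for 0 ≤ j ≤ ℓ−1 and a_j = λ for ℓ ≤ j ≤ m−1. Then the ℤ_m integer group determinant with these coefficients, i.e. the determinant of the circulant matrix (a_{(i−j) mod m})_{0≤i,j<m}, equals ℓ + λm. -/

import Mathlib

/-!
Conjugating by the Vandermonde matrix of a primitive `m`-th root of unity `ζ` diagonalises a
circulant matrix, so its determinant is `∏ₖ g (ζ ^ k)` with `g z = ∑ₜ aₜ zᵗ`. Here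
`g 1 = ℓ + λ m`, while `(z - 1) g z = z ^ ℓ - 1` for every other `m`-th root of unity `z`.
As `ζ ^ ℓ` is again primitive, `∏_{0<k<m} (ζ ^ (k ℓ) - 1) = ∏_{0<k<m} (ζ ^ k - 1) ≠ 0`, so the
factors with `k ≠ 0` multiply to `1`.
-/

/-- `D` is a `ℤ_m` integer group determinant: a determinant of an integer circulant
matrix `(a_{(i-j) mod m})`. -/
def IsCirculantDet (m : ℕ) (D : ℤ) : Prop :=
  ∃ a : Fin m → ℤ, (Matrix.circulant a).det = D

open Finset

namespace Matrix

variable {R : Type*} [CommRing R] {m : ℕ} [NeZero m] {ζ : R}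

theorem vandermonde_pow_mul_circulant (hζ : ζ ^ m = 1) (a : Fin m → R) :
    vandermonde (fun k : Fin m => ζ ^ (k : ℕ)) * circulant a =
      diagonal (fun k : Fin m => ∑ t, a t * (ζ ^ (k : ℕ)) ^ (t : ℕ)) *
        vandermonde (fun k : Fin m => ζ ^ (k : ℕ)) := by
  ext k i
  rw [mul_apply, diagonal_mul, vandermonde_apply, sum_mul,
    ← Equiv.sum_comp (Equiv.addLeft i)]
  refine sum_congr rfl fun t _ => ?_
  have hpow : (ζ ^ (k : ℕ)) ^ ((i + t : Fin m) : ℕ) =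
      (ζ ^ (k : ℕ)) ^ (i : ℕ) * (ζ ^ (k : ℕ)) ^ (t : ℕ) := by
    rw [← pow_add, Fin.val_add,
      ← pow_eq_pow_mod _ (by rw [pow_right_comm, hζ, one_pow])]
  simp only [Equiv.coe_addLeft, vandermonde_apply, circulant_apply, add_sub_cancel_left, hpow]
  ring

theorem det_circulant_eq_prod [IsDomain R] (hζ : IsPrimitiveRoot ζ m) (a : Fin m → R) :
    (circulant a).det = ∏ k ∈ range m, ∑ t : Fin m, a t * (ζ ^ k) ^ (t : ℕ) := by
  have hV : (vandermonde (fun k : Fin m => ζ ^ (k : ℕ))).det ≠ 0 :=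
    det_vandermonde_ne_zero_iff.2 fun i j hij => Fin.ext (hζ.pow_inj i.isLt j.isLt hij)
  have h := congrArg det (vandermonde_pow_mul_circulant hζ.pow_eq_one a)
  rw [det_mul, det_mul, det_diagonal] at h
  rw [← Fin.prod_univ_eq_prod_range (fun k => ∑ t : Fin m, a t * (ζ ^ k) ^ (t : ℕ))]
  exact mul_right_cancel₀ hV ((mul_comm _ _).trans h)

end Matrix

theorem sum_ite_lt_mul_pow {R : Type*} [CommRing R] {m ℓ : ℕ} (hℓm : ℓ ≤ m) (lam z : R) :
    ∑ t : Fin m, (if (t : ℕ) < ℓ then lam + 1 else lam) * z ^ (t : ℕ) =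
      lam * ∑ t ∈ range m, z ^ t + ∑ t ∈ range ℓ, z ^ t := by
  have hsplit : ∀ t : ℕ, (if t < ℓ then lam + 1 else lam) * z ^ t =
      lam * z ^ t + if t < ℓ then z ^ t else 0 := fun t => by split_ifs <;> ring
  have hstep : ∑ t ∈ range m, (if t < ℓ then z ^ t else 0) = ∑ t ∈ range ℓ, z ^ t := by
    rw [← sum_range_add_sum_Ico _ hℓm, sum_congr rfl fun t ht => if_pos (mem_range.1 ht),
      sum_eq_zero fun t ht => if_neg (not_lt.2 (mem_Ico.1 ht).1), add_zero]
  rw [Fin.sum_univ_eq_sum_range (fun t => (if t < ℓ then lam + 1 else lam) * z ^ t)]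
  simp only [hsplit, sum_add_distrib, ← mul_sum, hstep]

namespace IsPrimitiveRoot

variable {R : Type*} [CommRing R] [IsDomain R] {n ℓ : ℕ} {ζ : R}

theorem prod_pow_pow_sub_one (hζ : IsPrimitiveRoot ζ (n + 1)) (hℓ : ℓ.Coprime (n + 1)) :
    ∏ k ∈ range n, ((ζ ^ (k + 1)) ^ ℓ - 1) = ∏ k ∈ range n, (ζ ^ (k + 1) - 1) := by
  refine mul_left_cancel₀ (pow_ne_zero n (neg_ne_zero.2 one_ne_zero)) ?_
  simp only [pow_right_comm ζ _ ℓ]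
  rw [(hζ.pow_of_coprime ℓ hℓ).prod_pow_sub_one_eq_order, hζ.prod_pow_sub_one_eq_order]

theorem prod_eq_one_of_mul_sub_one_eq (hζ : IsPrimitiveRoot ζ (n + 1)) (hℓ : ℓ.Coprime (n + 1))
    {u : ℕ → R} (hu : ∀ k < n, u k * (ζ ^ (k + 1) - 1) = (ζ ^ (k + 1)) ^ ℓ - 1) :
    ∏ k ∈ range n, u k = 1 := by
  have hne : ∏ k ∈ range n, (ζ ^ (k + 1) - 1) ≠ 0 := prod_ne_zero_iff.2 fun k hk =>
    sub_ne_zero.2 (hζ.pow_ne_one_of_pos_of_lt k.succ_ne_zero (by simpa using hk))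
  rw [← mul_eq_right₀ hne, ← prod_mul_distrib, ← hζ.prod_pow_pow_sub_one hℓ]
  exact prod_congr rfl fun k hk => hu k (mem_range.1 hk)

end IsPrimitiveRoot

theorem stmt10_general (m ℓ : ℕ) (hℓm : ℓ ≤ m)
    (h : Nat.gcd ℓ m = 1) (lam : ℤ) (a : Fin m → ℤ)
    (ha : ∀ j : Fin m, a j = if (j : ℕ) < ℓ then lam + 1 else lam) :
    (Matrix.circulant a).det = (ℓ : ℤ) + lam * m := by
  obtain ⟨n, rfl⟩ : ∃ n, m = n + 1 := Nat.exists_eq_succ_of_ne_zero (by rintro rfl; simp_all)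
  obtain ⟨ζ, hζ⟩ : ∃ ζ : ℂ, IsPrimitiveRoot ζ (n + 1) :=
    ⟨_, Complex.isPrimitiveRoot_exp (n + 1) n.succ_ne_zero⟩
  set g : ℂ → ℂ := fun z => ∑ t : Fin (n + 1), (a t : ℂ) * z ^ (t : ℕ)
  have hg z : g z = lam * ∑ t ∈ range (n + 1), z ^ t + ∑ t ∈ range ℓ, z ^ t := by
    convert sum_ite_lt_mul_pow hℓm (lam : ℂ) z using 3 with t
    rw [ha]; push_cast; split_ifs <;> rfl
  have hdet : ((Matrix.circulant a).det : ℂ) = ∏ k ∈ range (n + 1), g (ζ ^ k) := by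
    rw [Int.cast_det, Matrix.map_circulant, Matrix.det_circulant_eq_prod hζ]
  have hg_roots : ∏ k ∈ range n, g (ζ ^ (k + 1)) = 1 :=
    hζ.prod_eq_one_of_mul_sub_one_eq h fun k _ => by
      rw [hg, add_mul, mul_assoc, geom_sum_mul, geom_sum_mul, pow_right_comm ζ (k + 1),
        hζ.pow_eq_one, one_pow, sub_self, mul_zero, zero_add]
  have hg_one : g 1 = ℓ + lam * (n + 1) := by
    simp [hg, add_comm]
  rw [prod_range_succ', hg_roots, pow_zero, one_mul, hg_one] at hdet
  exact_mod_cast hdet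

/-- The circulant determinant with `ℓ` entries `λ + 1` followed by `m - ℓ` entries `λ`
equals `ℓ + λ m`, when `gcd(ℓ, m) = 1`. -/
theorem stmt10 (m ℓ : ℕ) (hm : 1 ≤ m) (hℓ1 : 1 ≤ ℓ) (hℓm : ℓ ≤ m)
    (h : Nat.gcd ℓ m = 1) (lam : ℤ) (a : Fin m → ℤ)
    (ha : ∀ j : Fin m, a j = if (j : ℕ) < ℓ then lam + 1 else lam) :
    (Matrix.circulant a).det = (ℓ : ℤ) + lam * m :=
  stmt10_general m ℓ hℓm h lam a ha
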